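/- Let (X_1, X_2, X_3) have the mixture law with c_2 = 6 + √3: with probability 1/c_2 for each j ∈ {1,2,3}, the vector is U e_j with U ~ Uniform(0,1]; with probability 1/c_2 for each pair 1 ≤ i < j ≤ 3, the vector is V (e_i + e_j) where V has density 2(1 − v) on (0,1]; and with probability √3/c_2, the vector is W (e_1 + e_2 + e_3) where W has distribution function G_2(z) = 1 − (1 − z)(1 − G_1(z)) on [0,1]. Then for every s ∈ (0,1), P(N_{s,3} = 2 | N_{s,3} ≥ 2) = √3/((1 − G_1(s))/(1 − s) + √3), and this does not converge as s ↑ 1; hence FD_{3,2} does not exist even though FD_{3,1} exists. -/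

import Mathlib

open MeasureTheory Filter Set Topology Classical

/-- Conditional probability `P(A | B)` as a real number. -/
noncomputable def condP {Ω : Type*} [MeasurableSpace Ω] (μ : Measure Ω) (A B : Set Ω) : ℝ :=
  (μ (A ∩ B)).toReal / (μ B).toReal

/-- The density `g₁` on `[0,1]`. -/
noncomputable def g1 (y : ℝ) : ℝ :=
  if ∃ k : ℕ, 1 - 1 / 2 ^ k ≤ y ∧ y ≤ 1 - 3 / 2 ^ (k + 2) then 2 else 0

/-- The distribution function of `g₁`. -/
noncomputable def G1 (y : ℝ) : ℝ := ∫ t in (0:ℝ)..y, g1 t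

/-- The distribution function `G₂(z) = 1 - (1-z)(1-G₁(z))` on `[0,1]`. -/
noncomputable def G2 (z : ℝ) : ℝ :=
  if z < 0 then 0 else if z ≤ 1 then 1 - (1 - z) * (1 - G1 z) else 1

/-- The uniform distribution on `(0,1]`. -/
noncomputable def unif : Measure ℝ := volume.restrict (Set.Ioc 0 1)

/-- The law with density `2(1-v)` on `(0,1]`. -/
noncomputable def nuV : Measure ℝ :=
  volume.withDensity fun v => ENNReal.ofReal (if v ∈ Set.Ioc (0:ℝ) 1 then 2 * (1 - v) else 0)

/-- The mixture law of `(X₁, X₂, X₃)` with `c₂ = 6 + √3`: the three axes carry the uniform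
law, the three diagonal pairs carry the law `nuV`, and the main diagonal carries the law `νW`
whose distribution function is `G₂`. -/
noncomputable def law3 (nuW : Measure ℝ) : Measure (ℝ × ℝ × ℝ) :=
  ENNReal.ofReal (1 / (6 + Real.sqrt 3)) •
    (Measure.map (fun u => (u, (0:ℝ), (0:ℝ))) unif +
     Measure.map (fun u => ((0:ℝ), u, (0:ℝ))) unif +
     Measure.map (fun u => ((0:ℝ), (0:ℝ), u)) unif) +
  ENNReal.ofReal (1 / (6 + Real.sqrt 3)) •
    (Measure.map (fun v => (v, v, (0:ℝ))) nuV +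
     Measure.map (fun v => ((0:ℝ), v, v)) nuV +
     Measure.map (fun v => (v, (0:ℝ), v)) nuV) +
  ENNReal.ofReal (Real.sqrt 3 / (6 + Real.sqrt 3)) •
    Measure.map (fun w => (w, w, w)) nuW

/-! For `s ≥ 0` a point on one of the seven rays of the mixture exceeds `s` in exactly as many
coordinates as the ray has nonzero ones, or in none. So `P(N = k)` is, up to the factor
`1/(6 + √3)`, the tail at `s` of the radial law of the rays with `k` nonzero coordinates:
`3(1 - s)`, `3(1 - s)²` and `√3 (1 - s)(1 - G₁ s)` for `k = 1, 2, 3`. Hence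
`P(N = 2 | N ≥ 2)` is a function of `(1 - G₁ s)/(1 - s)`, which equals `1` at the points
`1 - 2⁻ᵏ` and `2/3` at the points `1 - 3·2⁻⁽ᵏ⁺²⁾`, while `P(N = 1 | N ≥ 1) → 1` because
`G₁ s → 1`. -/

lemma condP_map {Ω α : Type*} [MeasurableSpace Ω] [MeasurableSpace α] {μ : Measure Ω}
    {X : Ω → α} (hX : Measurable X) {A B : Set α} (hA : MeasurableSet A) (hB : MeasurableSet B) :
    condP μ (X ⁻¹' A) (X ⁻¹' B) = condP (μ.map X) A B := by
  rw [condP, condP, Measure.map_apply hX (hA.inter hB), Measure.map_apply hX hB, preimage_inter]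

instance {α : Type*} [MeasurableSpace α] {μ : Measure α} [IsFiniteMeasure μ] (a : ℝ) :
    IsFiniteMeasure (ENNReal.ofReal a • μ) :=
  ⟨ENNReal.mul_lt_top ENNReal.ofReal_lt_top (measure_lt_top μ univ)⟩

lemma not_exists_tendsto_of_frequently_eq {α β : Type*} [TopologicalSpace β] [T2Space β]
    {f : α → β} {l : Filter α} {a b : β} (hab : a ≠ b)
    (ha : ∃ᶠ x in l, f x = a) (hb : ∃ᶠ x in l, f x = b) : ¬ ∃ L, Tendsto f l (𝓝 L) := by
  rintro ⟨L, hL⟩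
  exact hab ((tendsto_nhds_unique_of_frequently_eq hL tendsto_const_nhds ha).symm.trans
    (tendsto_nhds_unique_of_frequently_eq hL tendsto_const_nhds hb))

lemma tendsto_one_sub_div_two_pow {c : ℝ} (hc : 0 < c) :
    Tendsto (fun k : ℕ => 1 - c / 2 ^ k) atTop (𝓝[<] 1) := by
  have h : Tendsto (fun k : ℕ => c / 2 ^ k) atTop (𝓝 0) := by
    simpa [div_eq_mul_inv] using
      (tendsto_inv_atTop_zero.comp (tendsto_pow_atTop_atTop_of_one_lt one_lt_two)).const_mul c
  refine tendsto_nhdsWithin_iff.2 ⟨by simpa using tendsto_const_nhds.sub h, ?_⟩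
  exact Eventually.of_forall fun k => sub_lt_self (1 : ℝ) (by positivity)

lemma g1_eq_indicator :
    g1 = (⋃ k : ℕ, Icc (1 - 1 / 2 ^ k) (1 - 3 / 2 ^ (k + 2))).indicator fun _ => 2 := by
  funext y
  simp [g1, indicator_apply]

lemma g1_nonneg (y : ℝ) : 0 ≤ g1 y := by
  unfold g1; split_ifs <;> norm_num

lemma intervalIntegrable_g1 (a b : ℝ) : IntervalIntegrable g1 volume a b := by
  refine (intervalIntegrable_const (c := (2 : ℝ))).mono_fun ?_ (ae_of_all _ fun y => ?_)
  · rw [g1_eq_indicator]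
    exact (aestronglyMeasurable_const.indicator (MeasurableSet.iUnion fun _ => measurableSet_Icc))
  · simp only [g1]; split_ifs <;> norm_num

lemma G1_eq_add_integral (a b : ℝ) : G1 b = G1 a + ∫ t in a..b, g1 t :=
  (intervalIntegral.integral_add_adjacent_intervals
    (intervalIntegrable_g1 0 a) (intervalIntegrable_g1 a b)).symm

lemma G1_mono : Monotone G1 := fun a b hab => by
  rw [G1_eq_add_integral a b]
  linarith [intervalIntegral.integral_nonneg (μ := volume) hab fun x _ => g1_nonneg x]

lemma G1_nonneg {s : ℝ} (hs : 0 ≤ s) : 0 ≤ G1 s := by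
  simpa [G1] using G1_mono hs

lemma one_sub_inv_two_pow_le (k : ℕ) : 1 - 1 / (2 : ℝ) ^ k ≤ 1 - 3 / 2 ^ (k + 2) := by
  rw [pow_add]; field_simp; linarith

lemma one_sub_three_div_two_pow_le (k : ℕ) : 1 - 3 / (2 : ℝ) ^ (k + 2) ≤ 1 - 1 / 2 ^ (k + 1) := by
  rw [pow_add, pow_add]; field_simp; linarith

lemma integral_g1_block (k : ℕ) :
    ∫ t in (1 - 1 / (2 : ℝ) ^ k)..(1 - 3 / 2 ^ (k + 2)), g1 t = 1 / 2 ^ (k + 1) := by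
  rw [intervalIntegral.integral_of_le (one_sub_inv_two_pow_le k),
    setIntegral_congr_fun measurableSet_Ioc (g := fun _ => (2 : ℝ))
      fun y hy => show g1 y = 2 from if_pos ⟨k, hy.1.le, hy.2⟩,
    setIntegral_const, Real.volume_real_Ioc_of_le (one_sub_inv_two_pow_le k), smul_eq_mul]
  field_simp
  ring

lemma integral_g1_gap (k : ℕ) :
    ∫ t in (1 - 3 / (2 : ℝ) ^ (k + 2))..(1 - 1 / 2 ^ (k + 1)), g1 t = 0 := by
  rw [intervalIntegral.integral_of_le (one_sub_three_div_two_pow_le k),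
    integral_Ioc_eq_integral_Ioo]
  refine setIntegral_eq_zero_of_forall_eq_zero fun y hy => if_neg ?_
  rintro ⟨j, hj1, hj2⟩
  rcases le_or_gt j k with h | h
  · have : 3 / (2 : ℝ) ^ (k + 2) ≤ 3 / 2 ^ (j + 2) := by gcongr; norm_num
    linarith [hy.1]
  · have : 1 / (2 : ℝ) ^ j ≤ 1 / 2 ^ (k + 1) := by gcongr; exacts [one_le_two, h]
    linarith [hy.2]

lemma G1_one_sub_inv_two_pow (k : ℕ) : G1 (1 - 1 / 2 ^ k) = 1 - 1 / 2 ^ k := by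
  induction k with
  | zero => simp [G1]
  | succ k ih =>
    rw [G1_eq_add_integral (1 - 3 / 2 ^ (k + 2)), integral_g1_gap,
      G1_eq_add_integral (1 - 1 / 2 ^ k) (1 - 3 / 2 ^ (k + 2)), integral_g1_block, ih, pow_succ]
    field_simp
    ring

lemma G1_one_sub_three_div_two_pow (k : ℕ) :
    G1 (1 - 3 / 2 ^ (k + 2)) = 1 - 1 / 2 ^ (k + 1) := by
  rw [G1_eq_add_integral (1 - 1 / 2 ^ k), integral_g1_block, G1_one_sub_inv_two_pow, pow_succ]
  field_simp
  ring

lemma exists_lt_one_sub_inv_two_pow {s : ℝ} (hs : s < 1) : ∃ k : ℕ, s < 1 - 1 / 2 ^ k := by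
  obtain ⟨k, hk⟩ := exists_pow_lt_of_lt_one (sub_pos.2 hs) (by norm_num : (1 : ℝ) / 2 < 1)
  exact ⟨k, by rw [one_div_pow] at hk; linarith⟩

lemma G1_le_one {s : ℝ} (hs : s < 1) : G1 s ≤ 1 := by
  obtain ⟨k, hk⟩ := exists_lt_one_sub_inv_two_pow hs
  have := G1_mono hk.le
  rw [G1_one_sub_inv_two_pow] at this
  linarith [show (0 : ℝ) < 1 / 2 ^ k by positivity]

lemma tendsto_G1_nhdsLT_one : Tendsto G1 (𝓝[<] 1) (𝓝 1) := by
  refine tendsto_order.2 ⟨fun a ha => ?_, fun a ha => ?_⟩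
  · obtain ⟨k, hk⟩ := exists_lt_one_sub_inv_two_pow ha
    have hk1 : 1 - 1 / (2 : ℝ) ^ k < 1 := by linarith [show (0 : ℝ) < 1 / 2 ^ k by positivity]
    filter_upwards [Ioo_mem_nhdsLT hk1] with s hs
    linarith [G1_one_sub_inv_two_pow k ▸ G1_mono hs.1.le]
  · filter_upwards [self_mem_nhdsWithin] with s hs
    exact (G1_le_one hs).trans_lt ha

instance : IsProbabilityMeasure unif := ⟨by simp [unif]⟩

lemma unif_real_Ioi {s : ℝ} (hs : 0 ≤ s) (hs1 : s ≤ 1) : unif.real (Ioi s) = 1 - s := by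
  rw [unif, measureReal_restrict_apply measurableSet_Ioi,
    inter_comm, Ioc_inter_Ioi, sup_eq_right.2 hs, Real.volume_real_Ioc_of_le hs1]

lemma nuV_density_eq_indicator :
    (fun v : ℝ => if v ∈ Ioc (0 : ℝ) 1 then 2 * (1 - v) else 0) =
      (Ioc 0 1).indicator fun v => 2 * (1 - v) := by
  funext v; simp [indicator_apply]

lemma integrable_nuV_density :
    Integrable fun v : ℝ => if v ∈ Ioc (0 : ℝ) 1 then 2 * (1 - v) else 0 := by
  rw [nuV_density_eq_indicator]
  exact (by fun_prop : Continuous fun v : ℝ => 2 * (1 - v)).integrableOn_Ioc.integrable_indicator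
    measurableSet_Ioc

instance : IsFiniteMeasure nuV :=
  isFiniteMeasure_withDensity_ofReal integrable_nuV_density.hasFiniteIntegral

lemma nuV_real_Ioi {s : ℝ} (hs : 0 ≤ s) (hs1 : s ≤ 1) : nuV.real (Ioi s) = (1 - s) ^ 2 := by
  have hnonneg : ∀ v : ℝ, 0 ≤ if v ∈ Ioc (0 : ℝ) 1 then 2 * (1 - v) else 0 := fun v => by
    split_ifs with hv
    · linarith [hv.2]
    · rfl
  rw [nuV, measureReal_def, withDensity_apply _ measurableSet_Ioi,
    ← ofReal_integral_eq_lintegral_ofReal integrable_nuV_density.integrableOn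
      (ae_of_all _ hnonneg),
    ENNReal.toReal_ofReal (integral_nonneg hnonneg), nuV_density_eq_indicator,
    integral_indicator measurableSet_Ioc, Measure.restrict_restrict measurableSet_Ioc,
    Ioc_inter_Ioi, sup_eq_right.2 hs, ← intervalIntegral.integral_of_le hs1,
    intervalIntegral.integral_const_mul, intervalIntegral.integral_sub (by simp) (by simp)]
  simp only [intervalIntegral.integral_const, smul_eq_mul, mul_one, integral_id, one_pow]
  ring

lemma nuW_real_Ioi {nuW : Measure ℝ} [IsProbabilityMeasure nuW]
    (hW : ∀ z, nuW (Iic z) = ENNReal.ofReal (G2 z)) {s : ℝ} (hs : s ∈ Ioo (0 : ℝ) 1) :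
    nuW.real (Ioi s) = (1 - s) * (1 - G1 s) := by
  have hG2 : G2 s = 1 - (1 - s) * (1 - G1 s) := by
    rw [G2, if_neg hs.1.not_gt, if_pos hs.2.le]
  have hG1 := G1_le_one hs.2
  have : 0 ≤ G2 s := by rw [hG2]; nlinarith [G1_nonneg hs.1.le, hs.1, hs.2]
  rw [← compl_Iic, measureReal_compl measurableSet_Iic, probReal_univ, measureReal_def, hW,
    ENNReal.toReal_ofReal this, hG2]
  ring

noncomputable def exceedCount (s : ℝ) (p : ℝ × ℝ × ℝ) : ℕ :=
  (if s < p.1 then 1 else 0) + (if s < p.2.1 then 1 else 0) + (if s < p.2.2 then 1 else 0)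

lemma measurable_exceedCount (s : ℝ) : Measurable (exceedCount s) := by
  have hite : ∀ f : ℝ × ℝ × ℝ → ℝ, Measurable f →
      Measurable fun p => if s < f p then (1 : ℕ) else 0 := fun f hf =>
    Measurable.ite (measurableSet_lt measurable_const hf) measurable_const measurable_const
  exact ((hite _ (by fun_prop)).add (hite _ (by fun_prop))).add (hite _ (by fun_prop))

lemma measureReal_setOf_ite_mem (ν : Measure ℝ) (s : ℝ) (k : ℕ) {A : Set ℕ} (hA : 0 ∉ A) :
    ν.real {x | (if s < x then k else 0) ∈ A} = if k ∈ A then ν.real (Ioi s) else 0 := by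
  split_ifs with hk
  · congr 1; ext x; by_cases h : s < x <;> simp [h, hk, hA]
  · convert measureReal_empty; ext x; simp only [mem_ofPred_eq]; split_ifs <;> simp [*]

lemma law3_real_exceedCount_preimage {nuW : Measure ℝ} [IsProbabilityMeasure nuW]
    (hW : ∀ z, nuW (Iic z) = ENNReal.ofReal (G2 z)) {s : ℝ} (hs : s ∈ Ioo (0 : ℝ) 1)
    {A : Set ℕ} (hA : 0 ∉ A) :
    (law3 nuW).real (exceedCount s ⁻¹' A) =
      (3 * (if 1 ∈ A then 1 - s else 0) + 3 * (if 2 ∈ A then (1 - s) ^ 2 else 0)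
        + √3 * (if 3 ∈ A then (1 - s) * (1 - G1 s) else 0)) / (6 + √3) := by
  have hmeas := measurable_exceedCount s (MeasurableSet.of_discrete (s := A))
  rw [law3]
  repeat rw [measureReal_add_apply]
  simp only [measureReal_ennreal_smul_apply]
  repeat rw [measureReal_add_apply]
  repeat rw [map_measureReal_apply (by fun_prop) hmeas]
  simp only [preimage, mem_ofPred_eq, exceedCount, hs.1.le.not_gt, if_false, ite_add_ite,
    add_zero, zero_add, measureReal_setOf_ite_mem _ _ _ hA, unif_real_Ioi hs.1.le hs.2.le,
    nuV_real_Ioi hs.1.le hs.2.le, nuW_real_Ioi hW hs]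
  rw [ENNReal.toReal_ofReal (by positivity), ENNReal.toReal_ofReal (by positivity)]
  norm_num only
  split_ifs <;> ring

lemma condP_law3_exceedCount_eq_two {nuW : Measure ℝ} [IsProbabilityMeasure nuW]
    (hW : ∀ z, nuW (Iic z) = ENNReal.ofReal (G2 z)) {s : ℝ} (hs : s ∈ Ioo (0 : ℝ) 1) :
    condP (law3 nuW) (exceedCount s ⁻¹' {2}) (exceedCount s ⁻¹' Ici 2) =
      √3 / ((1 - G1 s) / (1 - s) + √3) := by
  rw [condP, ← preimage_inter, ← measureReal_def, ← measureReal_def,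
    law3_real_exceedCount_preimage hW hs (by simp), law3_real_exceedCount_preimage hW hs (by simp)]
  have hs1 : 0 < 1 - s := sub_pos.2 hs.2
  have hG1 : 0 ≤ 1 - G1 s := sub_nonneg.2 (G1_le_one hs.2)
  norm_num
  field_simp
  linear_combination (G1 s - 1) * Real.sq_sqrt (show (0 : ℝ) ≤ 3 by norm_num)

lemma condP_law3_exceedCount_eq_one {nuW : Measure ℝ} [IsProbabilityMeasure nuW]
    (hW : ∀ z, nuW (Iic z) = ENNReal.ofReal (G2 z)) {s : ℝ} (hs : s ∈ Ioo (0 : ℝ) 1) :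
    condP (law3 nuW) (exceedCount s ⁻¹' {1}) (exceedCount s ⁻¹' Ici 1) =
      3 / (3 + 3 * (1 - s) + √3 * (1 - G1 s)) := by
  rw [condP, ← preimage_inter, ← measureReal_def, ← measureReal_def,
    law3_real_exceedCount_preimage hW hs (by simp), law3_real_exceedCount_preimage hW hs (by simp)]
  have hs1 : 0 < 1 - s := sub_pos.2 hs.2
  have hG1 : 0 ≤ 1 - G1 s := sub_nonneg.2 (G1_le_one hs.2)
  norm_num
  field_simp

lemma frequently_G1_tail_ratio_eq_one :
    ∃ᶠ s in 𝓝[<] (1 : ℝ), (1 - G1 s) / (1 - s) = 1 :=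
  (tendsto_one_sub_div_two_pow one_pos).frequently <| Frequently.of_forall fun k => by
    rw [G1_one_sub_inv_two_pow, sub_sub_cancel, div_self (by positivity)]

lemma frequently_G1_tail_ratio_eq_two_thirds :
    ∃ᶠ s in 𝓝[<] (1 : ℝ), (1 - G1 s) / (1 - s) = 2 / 3 :=
  ((tendsto_one_sub_div_two_pow three_pos).comp (tendsto_add_atTop_nat 2)).frequently <|
    Frequently.of_forall fun k => by
      show (1 - G1 (1 - 3 / 2 ^ (k + 2))) / (1 - (1 - 3 / 2 ^ (k + 2))) = 2 / 3
      rw [G1_one_sub_three_div_two_pow, sub_sub_cancel, sub_sub_cancel, pow_succ]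
      field_simp
      ring

lemma not_exists_tendsto_sqrt_three_div_G1_tail_ratio :
    ¬ ∃ L, Tendsto (fun s => √3 / ((1 - G1 s) / (1 - s) + √3)) (𝓝[<] 1) (𝓝 L) := by
  have h3 : 0 < √3 := by positivity
  refine not_exists_tendsto_of_frequently_eq (a := √3 / (1 + √3)) (b := √3 / (2 / 3 + √3)) ?_
    (frequently_G1_tail_ratio_eq_one.mono fun s hs => by rw [hs])
    (frequently_G1_tail_ratio_eq_two_thirds.mono fun s hs => by rw [hs])
  rw [Ne, div_eq_div_iff (by positivity) (by positivity)]
  nlinarith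

lemma tendsto_three_div_G1_tail :
    Tendsto (fun s => 3 / (3 + 3 * (1 - s) + √3 * (1 - G1 s))) (𝓝[<] 1) (𝓝 1) := by
  have hs : Tendsto (fun s : ℝ => s) (𝓝[<] 1) (𝓝 1) :=
    tendsto_nhdsWithin_of_tendsto_nhds tendsto_id
  have h := (tendsto_const_nhds (x := (3 : ℝ))).div ((tendsto_const_nhds.add
    ((tendsto_const_nhds.sub hs).const_mul 3)).add
    ((tendsto_const_nhds.sub tendsto_G1_nhdsLT_one).const_mul √3))
    (by norm_num : (3 : ℝ) + 3 * (1 - 1) + √3 * (1 - 1) ≠ 0)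
  rwa [show (3 : ℝ) / (3 + 3 * (1 - 1) + √3 * (1 - 1)) = 1 by norm_num] at h

theorem stmt5_general {Ω : Type*} [MeasurableSpace Ω] (μ : Measure Ω)
    (nuW : Measure ℝ) [IsProbabilityMeasure nuW]
    (hW : ∀ z, nuW (Set.Iic z) = ENNReal.ofReal (G2 z))
    (X1 X2 X3 : Ω → ℝ) (h1 : Measurable X1) (h2 : Measurable X2) (h3 : Measurable X3)
    (hlaw : Measure.map (fun ω => (X1 ω, X2 ω, X3 ω)) μ = law3 nuW)
    (N : ℝ → Ω → ℕ)
    (hN : ∀ s ω, N s ω = (if s < X1 ω then 1 else 0) + (if s < X2 ω then 1 else 0)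
      + (if s < X3 ω then 1 else 0)) :
    (∀ s ∈ Set.Ioo (0:ℝ) 1,
      condP μ {ω | N s ω = 2} {ω | 2 ≤ N s ω} =
        Real.sqrt 3 / ((1 - G1 s) / (1 - s) + Real.sqrt 3)) ∧
    (¬ ∃ L : ℝ, Tendsto (fun s => condP μ {ω | N s ω = 2} {ω | 2 ≤ N s ω})
        (𝓝[<] (1:ℝ)) (𝓝 L)) ∧
    Tendsto (fun s => condP μ {ω | N s ω = 1} {ω | 1 ≤ N s ω}) (𝓝[<] (1:ℝ)) (𝓝 1) := by
  have hcond : ∀ s k, condP μ {ω | N s ω = k} {ω | k ≤ N s ω} =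
      condP (law3 nuW) (exceedCount s ⁻¹' {k}) (exceedCount s ⁻¹' Ici k) := fun s k => by
    rw [← hlaw, ← condP_map (h1.prodMk (h2.prodMk h3))
      (measurable_exceedCount s (measurableSet_singleton k))
      (measurable_exceedCount s measurableSet_Ici)]
    simp only [preimage, mem_ofPred_eq, mem_singleton_iff, mem_Ici, exceedCount, hN]
  have hIoo : Ioo 0 1 ∈ 𝓝[<] (1 : ℝ) := Ioo_mem_nhdsLT one_pos
  have htwo : ∀ s ∈ Ioo (0 : ℝ) 1, condP μ {ω | N s ω = 2} {ω | 2 ≤ N s ω} =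
      √3 / ((1 - G1 s) / (1 - s) + √3) := fun s hs => by
    rw [hcond, condP_law3_exceedCount_eq_two hW hs]
  refine ⟨htwo, fun ⟨L, hL⟩ => not_exists_tendsto_sqrt_three_div_G1_tail_ratio
    ⟨L, hL.congr' (eventually_of_mem hIoo htwo)⟩, tendsto_three_div_G1_tail.congr' ?_⟩
  filter_upwards [hIoo] with s hs
  rw [hcond, condP_law3_exceedCount_eq_one hW hs]

/-- Under the mixture law `law3 nuW`, where `nuW` has distribution function
`G₂`: for every `s ∈ (0,1)`,
`P(N_{s,3}=2 | N_{s,3}≥2) = √3/((1-G₁(s))/(1-s) + √3)`, which does not converge as `s ↑ 1`;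
hence `FD_{3,2}` does not exist, even though `FD_{3,1}` exists. -/
theorem stmt5 {Ω : Type*} [MeasurableSpace Ω] (μ : Measure Ω) [IsProbabilityMeasure μ]
    (nuW : Measure ℝ) [IsProbabilityMeasure nuW]
    (hW : ∀ z, nuW (Set.Iic z) = ENNReal.ofReal (G2 z))
    (X1 X2 X3 : Ω → ℝ) (h1 : Measurable X1) (h2 : Measurable X2) (h3 : Measurable X3)
    (hlaw : Measure.map (fun ω => (X1 ω, X2 ω, X3 ω)) μ = law3 nuW)
    (N : ℝ → Ω → ℕ)
    (hN : ∀ s ω, N s ω = (if s < X1 ω then 1 else 0) + (if s < X2 ω then 1 else 0)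
      + (if s < X3 ω then 1 else 0)) :
    (∀ s ∈ Set.Ioo (0:ℝ) 1,
      condP μ {ω | N s ω = 2} {ω | 2 ≤ N s ω} =
        Real.sqrt 3 / ((1 - G1 s) / (1 - s) + Real.sqrt 3)) ∧
    (¬ ∃ L : ℝ, Tendsto (fun s => condP μ {ω | N s ω = 2} {ω | 2 ≤ N s ω})
        (𝓝[<] (1:ℝ)) (𝓝 L)) ∧
    Tendsto (fun s => condP μ {ω | N s ω = 1} {ω | 1 ≤ N s ω}) (𝓝[<] (1:ℝ)) (𝓝 1) :=
  stmt5_general μ nuW hW X1 X2 X3 h1 h2 h3 hlaw N hN
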